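/- For any real numbers λ1 ≠ 0 and γ1, ..., γ6, the bilinear antisymmetric bracket on R^4 with basis {u1, u2, u3, u4} determined by [u1, u2] = λ1·u3, [u1, u4] = γ1·u1 + γ2·u2 + γ3·u3, [u2, u4] = γ4·u1 + γ5·u2 + γ6·u3, [u3, u4] = (γ1 + γ5)·u3, and all other basis brackets zero, satisfies the Jacobi identity; moreover the span of {u1, u2, u3} is an ideal isomorphic to the Heisenberg algebra h3. -/

import Mathlib

noncomputable section

/-- The standard basis `u1, u2, u3, u4` of `ℝ⁴`. -/
def e4 (i : Fin 4) : Fin 4 → ℝ := Pi.single i 1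

/-! The bracket is the semidirect product of the Heisenberg algebra `span {u1, u2, u3}` with
`ℝ u4`, and the condition `[u3, u4] = (γ1 + γ5) u3` is exactly what makes `[·, u4]` a derivation of
it; since the Jacobiator is trilinear, the Jacobi identity reduces to basis triples. The span of
`u1, u2, u3` is stable under bracketing with the basis, hence an ideal, and rescaling `u3` by `λ1`
turns its basis into a standard Heisenberg basis; a linear isomorphism matching the brackets of
basis elements is a Lie isomorphism. -/

section Jacobiator

variable {R M : Type*} [CommSemiring R] [AddCommMonoid M] [Module R M]

def jacobiator (B : M →ₗ[R] M →ₗ[R] M) : M →ₗ[R] M →ₗ[R] M →ₗ[R] M :=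
  B.compr₂ B + (LinearMap.llcomp R M M M).compl₁₂ B.flip B +
    ((LinearMap.llcomp R M M M).compl₁₂ B.flip B.flip).flip

theorem jacobiator_apply (B : M →ₗ[R] M →ₗ[R] M) (X Y Z : M) :
    jacobiator B X Y Z = B (B X Y) Z + B (B Y Z) X + B (B Z X) Y :=
  rfl

theorem jacobiator_eq_zero_of_basis {ι : Type*} (v : Module.Basis ι R M)
    {B : M →ₗ[R] M →ₗ[R] M} (h : ∀ i j k, jacobiator B (v i) (v j) (v k) = 0) :
    jacobiator B = 0 :=
  LinearMap.ext_basis v v fun i j => v.ext fun k => h i j k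

end Jacobiator

theorem jacobiator_eq_zero_of_semidirect_brackets {l1 γ1 γ2 γ3 γ4 γ5 γ6 : ℝ}
    {B : (Fin 4 → ℝ) →ₗ[ℝ] (Fin 4 → ℝ) →ₗ[ℝ] (Fin 4 → ℝ)} (hanti : ∀ X Y, B X Y = - B Y X)
    (h01 : B (e4 0) (e4 1) = l1 • e4 2) (h02 : B (e4 0) (e4 2) = 0) (h12 : B (e4 1) (e4 2) = 0)
    (h03 : B (e4 0) (e4 3) = γ1 • e4 0 + γ2 • e4 1 + γ3 • e4 2)
    (h13 : B (e4 1) (e4 3) = γ4 • e4 0 + γ5 • e4 1 + γ6 • e4 2)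
    (h23 : B (e4 2) (e4 3) = (γ1 + γ5) • e4 2) :
    jacobiator B = 0 := by
  have hself (X) : B X X = 0 := self_eq_neg.mp (hanti X X)
  have h10 : B (e4 1) (e4 0) = -(l1 • e4 2) := by rw [hanti, h01]
  have h20 : B (e4 2) (e4 0) = 0 := by rw [hanti, h02, neg_zero]
  have h21 : B (e4 2) (e4 1) = 0 := by rw [hanti, h12, neg_zero]
  have h30 : B (e4 3) (e4 0) = -(γ1 • e4 0 + γ2 • e4 1 + γ3 • e4 2) := by rw [hanti, h03]
  have h31 : B (e4 3) (e4 1) = -(γ4 • e4 0 + γ5 • e4 1 + γ6 • e4 2) := by rw [hanti, h13]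
  have h32 : B (e4 3) (e4 2) = -((γ1 + γ5) • e4 2) := by rw [hanti, h23]
  refine jacobiator_eq_zero_of_basis (Pi.basisFun ℝ (Fin 4)) fun i j k => ?_
  rw [show ⇑(Pi.basisFun ℝ (Fin 4)) = e4 from funext (Pi.basisFun_apply ℝ (Fin 4))]
  fin_cases i <;> fin_cases j <;> fin_cases k <;>
    simp only [Fin.zero_eta, Fin.mk_one, Fin.reduceFinMk, jacobiator_apply, hself, h01, h02, h12,
      h03, h13, h23, h10, h20, h21, h30, h31, h32, map_add, map_smul, map_neg, map_zero,
      LinearMap.add_apply, LinearMap.smul_apply, LinearMap.neg_apply, LinearMap.zero_apply] <;>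
    module

section LieAlgebra

variable {R L : Type*} [CommRing R] [LieRing L] [LieAlgebra R L]

theorem lie_mem_span_of_forall_mem {s t : Set L} (ht : Submodule.span R t = ⊤)
    (h : ∀ x ∈ t, ∀ y ∈ s, ⁅x, y⁆ ∈ Submodule.span R s) (x : L) {m : L}
    (hm : m ∈ Submodule.span R s) : ⁅x, m⁆ ∈ Submodule.span R s := by
  induction hm using Submodule.span_induction with
  | zero => simp
  | add m₁ m₂ _ _ ih₁ ih₂ => rw [lie_add]; exact add_mem ih₁ ih₂
  | smul a m _ ih => rw [lie_smul]; exact Submodule.smul_mem _ a ih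
  | mem y hy =>
    have hx : x ∈ Submodule.span R t := ht ▸ Submodule.mem_top
    induction hx using Submodule.span_induction with
    | zero => simp
    | add x₁ x₂ _ _ ih₁ ih₂ => rw [add_lie]; exact add_mem ih₁ ih₂
    | smul a x _ ih => rw [smul_lie]; exact Submodule.smul_mem _ a ih
    | mem x hx => exact h x hx y hy

def LieIdeal.ofSpan (s : Set L) {t : Set L} (ht : Submodule.span R t = ⊤)
    (h : ∀ x ∈ t, ∀ y ∈ s, ⁅x, y⁆ ∈ Submodule.span R s) : LieIdeal R L :=
  { Submodule.span R s with lie_mem := fun hm => lie_mem_span_of_forall_mem ht h _ hm }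

theorem lie_mem_span_of_semidirect_brackets (b : Fin 4 → L)
    {l1 γ1 γ2 γ3 γ4 γ5 γ6 : R} (hb01 : ⁅b 0, b 1⁆ = l1 • b 2) (hb02 : ⁅b 0, b 2⁆ = 0)
    (hb12 : ⁅b 1, b 2⁆ = 0) (hb03 : ⁅b 0, b 3⁆ = γ1 • b 0 + γ2 • b 1 + γ3 • b 2)
    (hb13 : ⁅b 1, b 3⁆ = γ4 • b 0 + γ5 • b 1 + γ6 • b 2)
    (hb23 : ⁅b 2, b 3⁆ = (γ1 + γ5) • b 2) :
    ∀ x ∈ Set.range b, ∀ y ∈ ({b 0, b 1, b 2} : Set L),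
      ⁅x, y⁆ ∈ Submodule.span R {b 0, b 1, b 2} := by
  have hb0 : b 0 ∈ Submodule.span R {b 0, b 1, b 2} := Submodule.subset_span (by simp)
  have hb1 : b 1 ∈ Submodule.span R {b 0, b 1, b 2} := Submodule.subset_span (by simp)
  have hb2 : b 2 ∈ Submodule.span R {b 0, b 1, b 2} := Submodule.subset_span (by simp)
  have hb10 : ⁅b 1, b 0⁆ = -(l1 • b 2) := by rw [← lie_skew, hb01]
  have hb20 : ⁅b 2, b 0⁆ = 0 := by rw [← lie_skew, hb02, neg_zero]
  have hb21 : ⁅b 2, b 1⁆ = 0 := by rw [← lie_skew, hb12, neg_zero]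
  have hb30 : ⁅b 3, b 0⁆ = -(γ1 • b 0 + γ2 • b 1 + γ3 • b 2) := by rw [← lie_skew, hb03]
  have hb31 : ⁅b 3, b 1⁆ = -(γ4 • b 0 + γ5 • b 1 + γ6 • b 2) := by rw [← lie_skew, hb13]
  have hb32 : ⁅b 3, b 2⁆ = -((γ1 + γ5) • b 2) := by rw [← lie_skew, hb23]
  rintro _ ⟨i, rfl⟩ y hy
  rcases hy with rfl | rfl | rfl <;> fin_cases i <;>
    simp only [Fin.zero_eta, Fin.mk_one, Fin.reduceFinMk, lie_self, hb01, hb02, hb12, hb10, hb20,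
      hb21, hb30, hb31, hb32] <;>
    apply_rules [neg_mem, add_mem, Submodule.smul_mem, zero_mem]

variable {L' : Type*} [LieRing L'] [LieAlgebra R L']

def Module.Basis.lieEquiv {ι : Type*} (v : Module.Basis ι R L) (w : Module.Basis ι R L')
    (h : ∀ i j, v.equiv w (Equiv.refl ι) ⁅v i, v j⁆ = ⁅w i, w j⁆) : L ≃ₗ⁅R⁆ L' :=
  let e := v.equiv w (Equiv.refl ι)
  have hbracket : (LieModule.toEnd R L L : L →ₗ[R] Module.End R L).compr₂ (e : L →ₗ[R] L') =
      (LieModule.toEnd R L' L' : L' →ₗ[R] Module.End R L').compl₁₂ (e : L →ₗ[R] L') e :=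
    LinearMap.ext_basis v v fun i j => by simpa [e, Module.Basis.equiv_apply] using h i j
  { e with map_lie' := fun {x y} => LinearMap.congr_fun₂ hbracket x y }

def IsHeisenbergBasis (v : Module.Basis (Fin 3) R L) : Prop :=
  ⁅v 0, v 1⁆ = v 2 ∧ ⁅v 0, v 2⁆ = 0 ∧ ⁅v 1, v 2⁆ = 0

theorem IsHeisenbergBasis.nonempty_lieEquiv {v : Module.Basis (Fin 3) R L}
    {w : Module.Basis (Fin 3) R L'} (hv : IsHeisenbergBasis v) (hw : IsHeisenbergBasis w) :
    Nonempty (L ≃ₗ⁅R⁆ L') := by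
  obtain ⟨hv01, hv02, hv12⟩ := hv
  obtain ⟨hw01, hw02, hw12⟩ := hw
  refine ⟨v.lieEquiv w fun i j => ?_⟩
  have hv10 : ⁅v 1, v 0⁆ = -v 2 := by rw [← lie_skew, hv01]
  have hv20 : ⁅v 2, v 0⁆ = 0 := by rw [← lie_skew, hv02, neg_zero]
  have hv21 : ⁅v 2, v 1⁆ = 0 := by rw [← lie_skew, hv12, neg_zero]
  have hw10 : ⁅w 1, w 0⁆ = -w 2 := by rw [← lie_skew, hw01]
  have hw20 : ⁅w 2, w 0⁆ = 0 := by rw [← lie_skew, hw02, neg_zero]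
  have hw21 : ⁅w 2, w 1⁆ = 0 := by rw [← lie_skew, hw12, neg_zero]
  fin_cases i <;> fin_cases j <;>
    simp [hv01, hv02, hv12, hv10, hv20, hv21, hw01, hw02, hw12, hw10, hw20, hw21,
      Module.Basis.equiv_apply]

theorem Module.Basis.isHeisenbergBasis_unitsSMul {v : Module.Basis (Fin 3) R L} (a : Rˣ)
    (h01 : ⁅v 0, v 1⁆ = (a : R) • v 2) (h02 : ⁅v 0, v 2⁆ = 0) (h12 : ⁅v 1, v 2⁆ = 0) :
    IsHeisenbergBasis (v.unitsSMul ![1, 1, a]) := by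
  simp [IsHeisenbergBasis, Module.Basis.unitsSMul_apply, Units.smul_def, h01, h02, h12]

theorem LieSubalgebra.nonempty_lieEquiv_heisenberg (K : LieSubalgebra R L) {x y z : L}
    (hK : K.toSubmodule = Submodule.span R {x, y, z}) (hli : LinearIndependent R ![x, y, z])
    (a : Rˣ) (hxy : ⁅x, y⁆ = (a : R) • z) (hxz : ⁅x, z⁆ = 0) (hyz : ⁅y, z⁆ = 0)
    {w : Module.Basis (Fin 3) R L'} (hw : IsHeisenbergBasis w) : Nonempty (K ≃ₗ⁅R⁆ L') := by
  have hrange : Submodule.span R (Set.range ![x, y, z]) = K.toSubmodule := by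
    rw [hK, Matrix.range_cons, Matrix.range_cons_cons_empty, Set.singleton_union]
  let v : Module.Basis (Fin 3) R K := (Module.Basis.span hli).map (LinearEquiv.ofEq _ _ hrange)
  have hv (i) : (v i : L) = ![x, y, z] i := by
    rw [Module.Basis.map_apply, Module.Basis.span_apply]; rfl
  have hv01 : ⁅v 0, v 1⁆ = (a : R) • v 2 := Subtype.ext <| by simp [hv, hxy]
  have hv02 : ⁅v 0, v 2⁆ = 0 := Subtype.ext <| by simp [hv, hxz]
  have hv12 : ⁅v 1, v 2⁆ = 0 := Subtype.ext <| by simp [hv, hyz]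
  exact (v.isHeisenbergBasis_unitsSMul a hv01 hv02 hv12).nonempty_lieEquiv hw

end LieAlgebra

/-- The brackets `[u1,u2] = λ1 u3`, `[u1,u4] = γ1 u1 + γ2 u2 + γ3 u3`,
`[u2,u4] = γ4 u1 + γ5 u2 + γ6 u3`, `[u3,u4] = (γ1+γ5) u3` (with `λ1 ≠ 0`) satisfy the
Jacobi identity; moreover in any Lie algebra realizing them, the span of `{u1,u2,u3}`
is a Lie ideal isomorphic to the Heisenberg algebra `h3`. -/
theorem semidirect_extension_jacobi_and_ideal
    (l1 γ1 γ2 γ3 γ4 γ5 γ6 : ℝ) (hl : l1 ≠ 0) :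
    (∀ B : (Fin 4 → ℝ) →ₗ[ℝ] (Fin 4 → ℝ) →ₗ[ℝ] (Fin 4 → ℝ),
      (∀ X Y, B X Y = - B Y X) →
      B (e4 0) (e4 1) = l1 • e4 2 →
      B (e4 0) (e4 2) = 0 → B (e4 1) (e4 2) = 0 →
      B (e4 0) (e4 3) = γ1 • e4 0 + γ2 • e4 1 + γ3 • e4 2 →
      B (e4 1) (e4 3) = γ4 • e4 0 + γ5 • e4 1 + γ6 • e4 2 →
      B (e4 2) (e4 3) = (γ1 + γ5) • e4 2 →
      ∀ X Y Z, B (B X Y) Z + B (B Y Z) X + B (B Z X) Y = 0) ∧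
    (∀ (L : Type) [LieRing L] [LieAlgebra ℝ L] (b : Module.Basis (Fin 4) ℝ L),
      ⁅b 0, b 1⁆ = l1 • b 2 →
      ⁅b 0, b 2⁆ = 0 → ⁅b 1, b 2⁆ = 0 →
      ⁅b 0, b 3⁆ = γ1 • b 0 + γ2 • b 1 + γ3 • b 2 →
      ⁅b 1, b 3⁆ = γ4 • b 0 + γ5 • b 1 + γ6 • b 2 →
      ⁅b 2, b 3⁆ = (γ1 + γ5) • b 2 →
      ∃ I : LieIdeal ℝ L,
        (I : Submodule ℝ L) = Submodule.span ℝ {b 0, b 1, b 2} ∧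
        (∀ (H : Type) [LieRing H] [LieAlgebra ℝ H] (c : Module.Basis (Fin 3) ℝ H),
          ⁅c 0, c 1⁆ = c 2 → ⁅c 0, c 2⁆ = 0 → ⁅c 1, c 2⁆ = 0 →
          Nonempty (I ≃ₗ⁅ℝ⁆ H))) := by
  refine ⟨fun B hanti h01 h02 h12 h03 h13 h23 X Y Z => ?_,
    fun L _ _ b hb01 hb02 hb12 hb03 hb13 hb23 => ?_⟩
  · have hJ := jacobiator_eq_zero_of_semidirect_brackets hanti h01 h02 h12 h03 h13 h23
    exact LinearMap.congr_fun (LinearMap.congr_fun₂ hJ X Y) Z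
  · have hli : LinearIndependent ℝ ![b 0, b 1, b 2] := by
      convert b.linearIndependent.comp ![0, 1, 2] (by decide) using 1
      ext i; fin_cases i <;> rfl
    let I : LieIdeal ℝ L := LieIdeal.ofSpan _ b.span_eq
      (lie_mem_span_of_semidirect_brackets b hb01 hb02 hb12 hb03 hb13 hb23)
    refine ⟨I, rfl, fun H _ _ c hc01 hc02 hc12 => ?_⟩
    exact LieSubalgebra.nonempty_lieEquiv_heisenberg I rfl hli (Units.mk0 l1 hl) hb01 hb02 hb12
      (w := c) ⟨hc01, hc02, hc12⟩
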